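/- Suppose b, α, β₁, β₂, k₁, k₂ are all strictly positive. Then the set of fixed points of V in S³ is exactly {λ₁} ∪ {λ₁₇(A) : A > 0 and A solves equation (E)}, where λ₁ = (1,0,0,0) and λ₁₇(A) = (b/(b+β₁A), bβ₁A/((b+β₁A)(b+α)), αbβ₁A/((b+β₁A)(b+β₂A)(b+α)), αβ₁β₂A²/((b+β₁A)(b+β₂A)(b+α))). -/

import Mathlib

/-- The discrete-time SISI epidemic operator. -/
noncomputable def sisiV (b α β₁ β₂ k₁ k₂ : ℝ) (p : ℝ × ℝ × ℝ × ℝ) : ℝ × ℝ × ℝ × ℝ :=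
  (p.1 + b - b * p.1 - β₁ * (k₁ * p.2.1 + k₂ * p.2.2.2) * p.1,
   p.2.1 - b * p.2.1 - α * p.2.1 + β₁ * (k₁ * p.2.1 + k₂ * p.2.2.2) * p.1,
   p.2.2.1 - b * p.2.2.1 + α * p.2.1 - β₂ * (k₁ * p.2.1 + k₂ * p.2.2.2) * p.2.2.1,
   p.2.2.2 - b * p.2.2.2 + β₂ * (k₁ * p.2.1 + k₂ * p.2.2.2) * p.2.2.1)

/-- The simplex S³ in ℝ⁴. -/
def simplexS3 : Set (ℝ × ℝ × ℝ × ℝ) :=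
  {p | 0 ≤ p.1 ∧ 0 ≤ p.2.1 ∧ 0 ≤ p.2.2.1 ∧ 0 ≤ p.2.2.2 ∧
       p.1 + p.2.1 + p.2.2.1 + p.2.2.2 = 1}

/-- Equation (E) in the unknown A. -/
def eqE (b α β₁ β₂ k₁ k₂ A : ℝ) : Prop :=
  1 = b * β₁ * k₁ / ((b + β₁ * A) * (b + α)) +
      α * β₁ * β₂ * k₂ * A / ((b + β₁ * A) * (b + β₂ * A) * (b + α))

/-- The interior fixed point candidate λ₁₇(A). -/
noncomputable def lam17 (b α β₁ β₂ A : ℝ) : ℝ × ℝ × ℝ × ℝ :=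
  (b / (b + β₁ * A),
   b * β₁ * A / ((b + β₁ * A) * (b + α)),
   α * b * β₁ * A / ((b + β₁ * A) * (b + β₂ * A) * (b + α)),
   α * β₁ * β₂ * A ^ 2 / ((b + β₁ * A) * (b + β₂ * A) * (b + α)))

/-- Equation (E) is equivalent to a polynomial identity when all denominators are positive. -/
lemma eqE_iff_poly (b α β₁ β₂ k₁ k₂ A : ℝ)
    (hb : 0 < b) (hα : 0 < α) (hβ₁ : 0 ≤ β₁) (hβ₂ : 0 ≤ β₂) (hA : 0 ≤ A) :
    eqE b α β₁ β₂ k₁ k₂ A ↔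
      (b + β₁ * A) * (b + β₂ * A) * (b + α) =
        b * β₁ * k₁ * (b + β₂ * A) + α * β₁ * β₂ * k₂ * A := by
  have hD1 : (0:ℝ) < b + β₁ * A := by positivity
  have hD2 : (0:ℝ) < b + β₂ * A := by positivity
  have hD3 : (0:ℝ) < b + α := by positivity
  unfold eqE
  constructor
  · intro h
    field_simp at h
    have h2 : ((b + β₁ * A) * (b + α)) * ((b + β₁ * A) * (b + β₂ * A) * (b + α)) =
        ((b + β₁ * A) * (b + α)) *
          (b * β₁ * k₁ * (b + β₂ * A) + α * β₁ * β₂ * k₂ * A) := by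
      linear_combination ((b + β₁ * A) * (b + α)) * h
    exact mul_left_cancel₀ (by positivity) h2
  · intro h
    field_simp
    linear_combination h

set_option maxHeartbeats 1000000 in
theorem fixedPoints_positive_params (b α β₁ β₂ k₁ k₂ : ℝ)
    (hb : 0 < b) (hα : 0 < α) (hβ₁ : 0 < β₁) (hβ₂ : 0 < β₂)
    (hk₁ : 0 < k₁) (hk₂ : 0 < k₂) :
    {p : ℝ × ℝ × ℝ × ℝ | p ∈ simplexS3 ∧ sisiV b α β₁ β₂ k₁ k₂ p = p} =
      {((1 : ℝ), (0 : ℝ), (0 : ℝ), (0 : ℝ))} ∪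
      {p | ∃ A : ℝ, 0 < A ∧ eqE b α β₁ β₂ k₁ k₂ A ∧ p = lam17 b α β₁ β₂ A} := by
  ext ⟨x, u, y, v⟩
  simp only [Set.mem_setOf_eq, Set.mem_union, Set.mem_singleton_iff, simplexS3, sisiV, lam17,
    Prod.mk.injEq]
  constructor
  · rintro ⟨⟨hx, hu, hy, hv, hsum⟩, e1, e2, e3, e4⟩
    rcases eq_or_lt_of_le (by positivity : (0:ℝ) ≤ k₁ * u + k₂ * v) with hA0 | hApos
    · -- A = 0 case
      left
      have hu0 : u = 0 := by nlinarith [mul_nonneg hk₁.le hu, mul_nonneg hk₂.le hv]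
      have hv0 : v = 0 := by nlinarith [mul_nonneg hk₁.le hu, mul_nonneg hk₂.le hv]
      subst hu0; subst hv0
      have hx1 : x = 1 := by nlinarith [e1]
      have hy0 : y = 0 := by nlinarith [e3]
      exact ⟨hx1, rfl, hy0, rfl⟩
    · right
      refine ⟨k₁ * u + k₂ * v, hApos, ?_⟩
      have hD1 : (0:ℝ) < b + β₁ * (k₁ * u + k₂ * v) := by positivity
      have hD2 : (0:ℝ) < b + β₂ * (k₁ * u + k₂ * v) := by positivity
      have hD3 : (0:ℝ) < b + α := by positivity
      have hE1 : x * (b + β₁ * (k₁ * u + k₂ * v)) = b := by linear_combination -e1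
      have hE2 : u * (b + α) = β₁ * (k₁ * u + k₂ * v) * x := by linear_combination -e2
      have hE3 : y * (b + β₂ * (k₁ * u + k₂ * v)) = α * u := by linear_combination -e3
      have hE4 : v * b = β₂ * (k₁ * u + k₂ * v) * y := by linear_combination -e4
      have hu' : u * ((b + β₁ * (k₁ * u + k₂ * v)) * (b + α)) = b * β₁ * (k₁ * u + k₂ * v) := by
        linear_combination (b + β₁ * (k₁ * u + k₂ * v)) * hE2 + β₁ * (k₁ * u + k₂ * v) * hE1
      have hy' : y * ((b + β₁ * (k₁ * u + k₂ * v)) * (b + β₂ * (k₁ * u + k₂ * v)) * (b + α))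
          = α * b * β₁ * (k₁ * u + k₂ * v) := by
        linear_combination (b + β₁ * (k₁ * u + k₂ * v)) * (b + α) * hE3 + α * hu'
      have hv'' : (v * ((b + β₁ * (k₁ * u + k₂ * v)) * (b + β₂ * (k₁ * u + k₂ * v)) * (b + α))) * b
          = (α * β₁ * β₂ * (k₁ * u + k₂ * v) ^ 2) * b := by
        linear_combination ((b + β₁ * (k₁ * u + k₂ * v)) * (b + β₂ * (k₁ * u + k₂ * v)) * (b + α)) * hE4
          + β₂ * (k₁ * u + k₂ * v) * hy'
      have hv' : v * ((b + β₁ * (k₁ * u + k₂ * v)) * (b + β₂ * (k₁ * u + k₂ * v)) * (b + α))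
          = α * β₁ * β₂ * (k₁ * u + k₂ * v) ^ 2 := mul_right_cancel₀ hb.ne' hv''
      have key : (k₁ * u + k₂ * v) *
          ((b + β₁ * (k₁ * u + k₂ * v)) * (b + β₂ * (k₁ * u + k₂ * v)) * (b + α))
          = (k₁ * u + k₂ * v) *
          (b * β₁ * k₁ * (b + β₂ * (k₁ * u + k₂ * v)) + α * β₁ * β₂ * k₂ * (k₁ * u + k₂ * v)) := by
        linear_combination k₁ * (b + β₂ * (k₁ * u + k₂ * v)) * hu' + k₂ * hv'
      have key2 := mul_left_cancel₀ hApos.ne' key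
      refine ⟨(eqE_iff_poly b α β₁ β₂ k₁ k₂ _ hb hα hβ₁.le hβ₂.le hApos.le).mpr key2,
        ?_, ?_, ?_, ?_⟩
      · rw [eq_div_iff hD1.ne']; exact hE1
      · rw [eq_div_iff (by positivity)]; exact hu'
      · rw [eq_div_iff (by positivity)]; exact hy'
      · rw [eq_div_iff (by positivity)]; exact hv'
  · rintro (⟨hx, hu, hy, hv⟩ | ⟨A, hApos, hE, hx, hu, hy, hv⟩)
    · subst hx; subst hu; subst hy; subst hv
      norm_num
    · subst hx; subst hu; subst hy; subst hv
      have hD1 : (0:ℝ) < b + β₁ * A := by positivity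
      have hD2 : (0:ℝ) < b + β₂ * A := by positivity
      have hD3 : (0:ℝ) < b + α := by positivity
      have key2 := (eqE_iff_poly b α β₁ β₂ k₁ k₂ A hb hα hβ₁.le hβ₂.le hApos.le).mp hE
      have hF : k₁ * (b * β₁ * A / ((b + β₁ * A) * (b + α))) +
          k₂ * (α * β₁ * β₂ * A ^ 2 / ((b + β₁ * A) * (b + β₂ * A) * (b + α))) = A := by
        field_simp
        linear_combination -key2
      refine ⟨⟨by positivity, by positivity, by positivity, by positivity, ?_⟩, ?_, ?_, ?_, ?_⟩
      · field_simp
        ring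
      · rw [hF]; field_simp; ring
      · rw [hF]; field_simp; ring
      · rw [hF]; field_simp; ring
      · rw [hF]; field_simp; ring
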